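/- arXiv:2405.06361 — 3 statements merged into one kernel-verified Lean document; each statement's English description precedes it below -/
import Mathlib

section
/- For two closed Euclidean balls of equal radius r in ℝ^d whose centers are at distance ε apart with 0 ≤ ε ≤ 2r, the volume of their symmetric difference equals 2·V_S·(1 − I_{(2rh−h²)/r²}((d+1)/2, 1/2)), where h = r − ε/2, V_S is the volume of a ball of radius r, and I_x(a,b) is the regularized incomplete beta function. -/
/-!
Move the two centres to `0` and `ε e₀` by a rigid motion and slice both balls by the hyperplanes
`y₀ = t`. Every slice is a `(d-1)`-ball of radius `√(r² - t²)` (resp. `√(r² - (t - ε)²)`), so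
by Fubini the lens `B(0, r) ∩ B(ε e₀, r)` has volume `2 ∫_{ε/2}^r √(r² - t²)^(d-1) dt · V₁`,
twice a spherical cap (`V₁` the volume of the unit `(d-1)`-ball), and the ball itself is the
case `ε = 0`. The substitution `u = 1 - t²/r²` turns the cap integral into the incomplete beta
integral `∫_0^{1-ε²/(4r²)} u^((d-1)/2) (1-u)^(-1/2) du`, and
`vol (A ∆ B) = vol A + vol B - 2 vol (A ∩ B)` finishes the computation.
-/

open MeasureTheory Metric

/-- The regularized incomplete beta function `I_x(a, b)`. -/
noncomputable def regIncBeta (a b x : ℝ) : ℝ :=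
  (∫ t in (0 : ℝ)..x, t ^ (a - 1) * (1 - t) ^ (b - 1)) /
    ∫ t in (0 : ℝ)..1, t ^ (a - 1) * (1 - t) ^ (b - 1)

open Set
open scoped symmDiff

theorem volume_closedBall_inter_closedBall_congr {E : Type*} [NormedAddCommGroup E]
    [InnerProductSpace ℝ E] [FiniteDimensional ℝ E] [MeasurableSpace E] [BorelSpace E]
    {x y x' y' : E} (h : dist x y = dist x' y') (r s : ℝ) :
    volume (closedBall x r ∩ closedBall y s) = volume (closedBall x' r ∩ closedBall y' s) := by
  set L := Submodule.reflection (ℝ ∙ ((y - x) - (y' - x')))ᗮ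
  have hL : L (y - x) = y' - x' := by
    apply Submodule.reflection_sub
    rw [← dist_eq_norm, ← dist_eq_norm, dist_comm, h, dist_comm]
  have hφ : MeasurePreserving (fun z => L (z - x) + x') volume volume :=
    (measurePreserving_add_right volume x').comp
      (L.measurePreserving.comp (measurePreserving_sub_right volume x))
  have hφy : ∀ z, L (z - x) + x' - y' = L (z - y) := fun z => by
    rw [← sub_sub_sub_cancel_right z y x, L.map_sub (z - x), hL]; abel
  have hpre : (fun z => L (z - x) + x') ⁻¹' (closedBall x' r ∩ closedBall y' s)
      = closedBall x r ∩ closedBall y s := by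
    ext z
    simp only [mem_preimage, mem_inter_iff, mem_closedBall, dist_eq_norm, add_sub_cancel_right,
      hφy, LinearIsometryEquiv.norm_map]
  rw [← hpre, hφ.measure_preimage
    (measurableSet_closedBall.inter measurableSet_closedBall).nullMeasurableSet]

theorem volume_eq_lintegral_volume_slice {n : ℕ} {S : Set (EuclideanSpace ℝ (Fin (n + 1)))}
    (hS : MeasurableSet S) :
    volume S = ∫⁻ t, volume {z : Fin n → ℝ | WithLp.toLp 2 (Fin.cons t z) ∈ S} := by
  set F := (MeasurableEquiv.toLp 2 (Fin (n + 1) → ℝ)).symm.trans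
    (MeasurableEquiv.piFinSuccAbove (fun _ : Fin (n + 1) => ℝ) 0)
  have hF : MeasurePreserving F volume volume :=
    (volume_preserving_piFinSuccAbove (fun _ : Fin (n + 1) => ℝ) 0).comp
      (EuclideanSpace.volume_preserving_symm_measurableEquiv_toLp (Fin (n + 1)))
  rw [← (hF.symm F).measure_preimage hS.nullMeasurableSet, Measure.volume_eq_prod,
    Measure.prod_apply (F.symm.measurable hS)]
  refine lintegral_congr fun t => congrArg volume ?_
  ext z
  simp only [F, MeasurableEquiv.trans_symm, MeasurableEquiv.trans_apply, mem_preimage,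
    MeasurableEquiv.piFinSuccAbove_symm_apply, Fin.insertNthEquiv_zero, mem_ofPred_eq]
  rfl

theorem toLp_cons_mem_closedBall_single_iff {n : ℕ} {r : ℝ} (hr : 0 ≤ r) (a t : ℝ)
    (z : Fin n → ℝ) :
    WithLp.toLp 2 (Fin.cons t z : Fin (n + 1) → ℝ) ∈ closedBall (EuclideanSpace.single 0 a) r ↔
      (t - a) ^ 2 + ∑ i, z i ^ 2 ≤ r ^ 2 := by
  rw [mem_closedBall, EuclideanSpace.dist_eq, Real.sqrt_le_left hr, Fin.sum_univ_succ]
  simp [Real.dist_eq, sq_abs, Fin.succ_ne_zero]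

theorem volume_sq_add_sumSq_le {n : ℕ} {r t : ℝ} (h : t ^ 2 ≤ r ^ 2) :
    volume {z : Fin n → ℝ | t ^ 2 + ∑ i, z i ^ 2 ≤ r ^ 2} =
      ENNReal.ofReal (√(r ^ 2 - t ^ 2) ^ n) *
        volume (closedBall (0 : EuclideanSpace ℝ (Fin n)) 1) := by
  have hset : {z : Fin n → ℝ | t ^ 2 + ∑ i, z i ^ 2 ≤ r ^ 2} =
      WithLp.toLp 2 ⁻¹' closedBall (0 : EuclideanSpace ℝ (Fin n)) √(r ^ 2 - t ^ 2) := by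
    rw [EuclideanSpace.closedBall_zero_eq _ (Real.sqrt_nonneg _), Real.sq_sqrt (by linarith)]
    ext z
    simp only [mem_ofPred_eq, mem_preimage]
    constructor <;> intro hz <;> linarith
  rw [hset, (PiLp.volume_preserving_toLp (Fin n)).measure_preimage
      measurableSet_closedBall.nullMeasurableSet,
    Measure.addHaar_closedBall' _ _ (Real.sqrt_nonneg _), finrank_euclideanSpace_fin]

theorem volume_sq_add_sumSq_le_of_lt {n : ℕ} {r t : ℝ} (h : r ^ 2 < t ^ 2) :
    volume {z : Fin n → ℝ | t ^ 2 + ∑ i, z i ^ 2 ≤ r ^ 2} = 0 := by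
  convert measure_empty (μ := volume)
  refine eq_empty_of_forall_notMem fun z hz => ?_
  have : 0 ≤ ∑ i, z i ^ 2 := by positivity
  exact absurd hz.out (by linarith)

theorem setLIntegral_Ioi_volume_sq_add_sumSq_le {n : ℕ} {a r : ℝ} (ha : -r ≤ a) (har : a ≤ r) :
    ∫⁻ t in Ioi a, volume {z : Fin n → ℝ | t ^ 2 + ∑ i, z i ^ 2 ≤ r ^ 2} =
      ENNReal.ofReal (∫ t in a..r, √(r ^ 2 - t ^ 2) ^ n) *
        volume (closedBall (0 : EuclideanSpace ℝ (Fin n)) 1) := by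
  rw [← Ioc_union_Ioi_eq_Ioi har, lintegral_union measurableSet_Ioi Ioc_disjoint_Ioi_same,
    setLIntegral_congr_fun measurableSet_Ioi fun t ht =>
      volume_sq_add_sumSq_le_of_lt (by nlinarith [ht.out]),
    setLIntegral_congr_fun measurableSet_Ioc fun t ht =>
      volume_sq_add_sumSq_le (by nlinarith [ht.1, ht.2]),
    lintegral_zero, add_zero, lintegral_mul_const' _ _ measure_closedBall_lt_top.ne,
    intervalIntegral.integral_of_le har, ofReal_integral_eq_lintegral_ofReal
      (by fun_prop : Continuous fun t : ℝ => √(r ^ 2 - t ^ 2) ^ n).integrableOn_Ioc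
      (Filter.Eventually.of_forall fun t => by positivity)]

theorem volume_closedBall_inter_closedBall_single {n : ℕ} {r ε : ℝ} (hr : 0 ≤ r) (hε : 0 ≤ ε) :
    volume (closedBall (0 : EuclideanSpace ℝ (Fin (n + 1))) r ∩
        closedBall (EuclideanSpace.single 0 ε) r) =
      2 * ∫⁻ t in Ioi (ε / 2), volume {z : Fin n → ℝ | t ^ 2 + ∑ i, z i ^ 2 ≤ r ^ 2} := by
  set lens := closedBall (0 : EuclideanSpace ℝ (Fin (n + 1))) r ∩
    closedBall (EuclideanSpace.single 0 ε) r
  set f : ℝ → ENNReal := fun t => volume {z : Fin n → ℝ | t ^ 2 + ∑ i, z i ^ 2 ≤ r ^ 2}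
  have h0 : (0 : EuclideanSpace ℝ (Fin (n + 1))) = EuclideanSpace.single 0 0 :=
    ((PiLp.single_eq_zero_iff 2 0).2 rfl).symm
  have hslice (t : ℝ) (z : Fin n → ℝ) : WithLp.toLp 2 (Fin.cons t z : Fin (n + 1) → ℝ) ∈ lens ↔
      t ^ 2 + ∑ i, z i ^ 2 ≤ r ^ 2 ∧ (t - ε) ^ 2 + ∑ i, z i ^ 2 ≤ r ^ 2 := by
    rw [mem_inter_iff, h0, toLp_cons_mem_closedBall_single_iff hr,
      toLp_cons_mem_closedBall_single_iff hr, sub_zero]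
  have hright : EqOn (fun t => volume {z : Fin n → ℝ | WithLp.toLp 2 (Fin.cons t z) ∈ lens})
      f (Ioi (ε / 2)) := by
    intro t ht
    refine congrArg volume (ext fun z => ?_)
    simp only [mem_ofPred_eq, hslice]
    have : (t - ε) ^ 2 ≤ t ^ 2 := by nlinarith [ht.out]
    exact and_iff_left_of_imp fun h => by linarith
  have hleft : EqOn (fun t => volume {z : Fin n → ℝ | WithLp.toLp 2 (Fin.cons t z) ∈ lens})
      (fun t => f (ε - t)) (Iic (ε / 2)) := by
    intro t ht
    refine congrArg volume (ext fun z => ?_)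
    simp only [mem_ofPred_eq, hslice]
    have : t ^ 2 ≤ (ε - t) ^ 2 := by nlinarith [ht.out]
    rw [← neg_sub, neg_sq]
    exact and_iff_right_of_imp fun h => by linarith
  have hreflect : ∫⁻ t in Iic (ε / 2), f (ε - t) = ∫⁻ t in Ioi (ε / 2), f t := by
    have hpre : (fun t => ε - t) ⁻¹' Ici (ε / 2) = Iic (ε / 2) := by
      ext t
      simp only [mem_preimage, mem_Ici, mem_Iic]
      constructor <;> intro h <;> linarith
    rw [← hpre, (volume.measurePreserving_sub_left ε).setLIntegral_comp_preimage_emb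
      (MeasurableEquiv.subLeft ε).measurableEmbedding, setLIntegral_congr Ioi_ae_eq_Ici]
  rw [volume_eq_lintegral_volume_slice (measurableSet_closedBall.inter measurableSet_closedBall),
    ← lintegral_add_compl _ (measurableSet_Ioi (a := ε / 2)), compl_Ioi,
    setLIntegral_congr_fun measurableSet_Ioi hright, setLIntegral_congr_fun measurableSet_Iic hleft,
    hreflect, two_mul]

theorem rpow_mul_one_sub_rpow_neg_half_at_one_sub_sq_div_sq (n : ℕ) {r t : ℝ} (ht : 0 < t)
    (htr : t ≤ r) :
    (1 - t ^ 2 / r ^ 2) ^ ((n : ℝ) / 2) * (1 - (1 - t ^ 2 / r ^ 2)) ^ (-(1 / 2) : ℝ) =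
      r / t * (√(r ^ 2 - t ^ 2) / r) ^ n := by
  have hr : 0 < r := ht.trans_le htr
  have hu : 1 - t ^ 2 / r ^ 2 = (√(r ^ 2 - t ^ 2) / r) ^ 2 := by
    rw [div_pow, Real.sq_sqrt (by nlinarith)]
    field_simp
  rw [sub_sub_cancel, hu, ← Real.rpow_natCast _ 2, ← Real.rpow_mul (by positivity),
    ← div_pow, ← Real.rpow_natCast (t / r) 2, ← Real.rpow_mul (by positivity), Nat.cast_ofNat,
    mul_div_cancel₀ _ two_ne_zero, Real.rpow_natCast, show (2 : ℝ) * -(1 / 2) = -1 by norm_num,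
    Real.rpow_neg_one, inv_div, mul_comm]

theorem integral_rpow_mul_one_sub_rpow_neg_half (n : ℕ) {r s : ℝ} (hr : 0 < r) (hs : 0 ≤ s)
    (hsr : s ≤ r) :
    ∫ u in 0..1 - s ^ 2 / r ^ 2, u ^ ((n : ℝ) / 2) * (1 - u) ^ (-(1 / 2) : ℝ) =
      2 / r ^ (n + 1) * ∫ t in s..r, √(r ^ 2 - t ^ 2) ^ n := by
  set g : ℝ → ℝ := fun u => u ^ ((n : ℝ) / 2) * (1 - u) ^ (-(1 / 2) : ℝ)
  have hsubst := intervalIntegral.integral_comp_mul_deriv_of_deriv_nonpos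
    (f := fun t => 1 - t ^ 2 / r ^ 2) (f' := fun t => -(2 * t / r ^ 2)) (g := g) (a := s) (b := r)
    (by fun_prop)
    (fun t _ => by simpa using ((hasDerivAt_pow 2 t).div_const (r ^ 2)).const_sub 1)
    (fun t ht => by
      rw [min_eq_left hsr] at ht
      have : 0 < t := hs.trans_lt ht.1
      have : 0 < 2 * t / r ^ 2 := by positivity
      linarith)
  have hpoint : ∀ᵐ t, t ∈ uIoc s r → (g ∘ fun t => 1 - t ^ 2 / r ^ 2) t * -(2 * t / r ^ 2) =
      -(2 / r ^ (n + 1) * √(r ^ 2 - t ^ 2) ^ n) := by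
    refine Filter.Eventually.of_forall fun t ht => ?_
    rw [uIoc_of_le hsr] at ht
    have ht0 : 0 < t := hs.trans_lt ht.1
    simp only [Function.comp_apply, g]
    rw [rpow_mul_one_sub_rpow_neg_half_at_one_sub_sq_div_sq n ht0 ht.2, div_pow]
    field_simp
    ring
  rw [intervalIntegral.integral_congr_ae hpoint, intervalIntegral.integral_neg,
    intervalIntegral.integral_const_mul, div_self (pow_ne_zero 2 hr.ne'), sub_self] at hsubst
  rw [intervalIntegral.integral_symm, ← hsubst, neg_neg]

theorem regIncBeta_one_sub_sq_div_sq (n : ℕ) {r s : ℝ} (hr : 0 < r) (hs : 0 ≤ s) (hsr : s ≤ r) :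
    regIncBeta (((n : ℝ) + 2) / 2) (1 / 2) (1 - s ^ 2 / r ^ 2) =
      (∫ t in s..r, √(r ^ 2 - t ^ 2) ^ n) / ∫ t in 0..r, √(r ^ 2 - t ^ 2) ^ n := by
  have hfull := integral_rpow_mul_one_sub_rpow_neg_half n hr le_rfl hr.le
  rw [zero_pow two_ne_zero, zero_div, sub_zero] at hfull
  rw [regIncBeta, show ((n : ℝ) + 2) / 2 - 1 = n / 2 by ring,
    show (1 / 2 : ℝ) - 1 = -(1 / 2) by norm_num,
    integral_rpow_mul_one_sub_rpow_neg_half n hr hs hsr, hfull,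
    mul_div_mul_left _ _ (by positivity)]

theorem measureReal_closedBall_inter_closedBall {n : ℕ} (x y : EuclideanSpace ℝ (Fin (n + 1)))
    {r : ℝ} (hr : 0 ≤ r) (hxy : dist x y ≤ 2 * r) :
    volume.real (closedBall x r ∩ closedBall y r) =
      2 * (∫ t in dist x y / 2..r, √(r ^ 2 - t ^ 2) ^ n) *
        volume.real (closedBall (0 : EuclideanSpace ℝ (Fin n)) 1) := by
  have hdist : dist x y = dist 0 (EuclideanSpace.single (0 : Fin (n + 1)) (dist x y)) := by
    simp
  rw [measureReal_def, volume_closedBall_inter_closedBall_congr hdist,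
    volume_closedBall_inter_closedBall_single hr dist_nonneg,
    setLIntegral_Ioi_volume_sq_add_sumSq_le (by linarith [dist_nonneg (x := x) (y := y)])
      (by linarith),
    ENNReal.toReal_mul, ENNReal.toReal_mul, ENNReal.toReal_ofReal, measureReal_def]
  · rw [ENNReal.toReal_ofNat, mul_assoc]
  · exact intervalIntegral.integral_nonneg (by linarith) fun t _ => by positivity

theorem measureReal_closedBall {n : ℕ} (x : EuclideanSpace ℝ (Fin (n + 1))) {r : ℝ} (hr : 0 ≤ r) :
    volume.real (closedBall x r) =
      2 * (∫ t in 0..r, √(r ^ 2 - t ^ 2) ^ n) *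
        volume.real (closedBall (0 : EuclideanSpace ℝ (Fin n)) 1) := by
  simpa using measureReal_closedBall_inter_closedBall x x hr (by simpa using hr)

theorem measureReal_symmDiff_eq_add_sub_inter {α : Type*} [MeasurableSpace α] {μ : Measure α}
    {s t : Set α} (hs : MeasurableSet s) (ht : MeasurableSet t) (hμs : μ s ≠ ⊤) (hμt : μ t ≠ ⊤) :
    μ.real (s ∆ t) = μ.real s + μ.real t - 2 * μ.real (s ∩ t) := by
  have hs' := measureReal_sdiff_add_inter (μ := μ) ht hμs
  have ht' := measureReal_sdiff_add_inter (μ := μ) hs hμt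
  rw [inter_comm] at ht'
  rw [measureReal_symmDiff_eq hs ht hμs hμt]
  linarith

/-- for two closed Euclidean balls of equal radius `r` in `ℝ^d` with centers
at distance `ε`, `0 ≤ ε ≤ 2r`, the volume of their symmetric difference equals
`2 · V_S · (1 − I_{(2rh−h²)/r²}((d+1)/2, 1/2))` with `h = r − ε/2`. -/
theorem stmt_5 {d : ℕ} (hd : 1 ≤ d) (r ε : ℝ) (hr : 0 < r)
    (hε0 : 0 ≤ ε) (hε : ε ≤ 2 * r)
    (x xt : EuclideanSpace ℝ (Fin d)) (hdist : dist x xt = ε) :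
    (volume ((Metric.closedBall x r \ Metric.closedBall xt r) ∪
        (Metric.closedBall xt r \ Metric.closedBall x r))).toReal =
      2 * (volume (Metric.closedBall x r)).toReal *
        (1 - regIncBeta (((d : ℝ) + 1) / 2) (1 / 2)
          ((2 * r * (r - ε / 2) - (r - ε / 2) ^ 2) / r ^ 2)) := by
  obtain ⟨n, rfl⟩ : ∃ n, d = n + 1 := ⟨d - 1, by omega⟩
  have hball : 0 < volume.real (closedBall x r) :=
    ENNReal.toReal_pos (measure_closedBall_pos volume x hr).ne' measure_closedBall_lt_top.ne
  have hinter := measureReal_closedBall_inter_closedBall x xt hr.le (hdist ▸ hε)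
  rw [measureReal_closedBall x hr.le] at hball
  rw [← Set.symmDiff_def, ← measureReal_def, ← measureReal_def,
    measureReal_symmDiff_eq_add_sub_inter measurableSet_closedBall measurableSet_closedBall
      measure_closedBall_lt_top.ne measure_closedBall_lt_top.ne,
    hinter, hdist, measureReal_closedBall x hr.le, measureReal_closedBall xt hr.le,
    show (((n + 1 : ℕ) : ℝ) + 1) / 2 = ((n : ℝ) + 2) / 2 by push_cast; ring,
    show (2 * r * (r - ε / 2) - (r - ε / 2) ^ 2) / r ^ 2 = 1 - (ε / 2) ^ 2 / r ^ 2 by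
      field_simp; ring,
    regIncBeta_one_sub_sq_div_sq n hr (by linarith) (by linarith)]
  have hK : ∫ t in 0..r, √(r ^ 2 - t ^ 2) ^ n ≠ 0 := by
    rintro h
    simp [h] at hball
  field_simp
  ring
end

section
/- The volume of a hyperspherical cap of height h (0 ≤ h ≤ r) of a d-dimensional Euclidean ball of radius r equals (1/2)·V_S·I_{(2rh−h²)/r²}((d+1)/2, 1/2), where V_S is the volume of the full ball and I_x(a,b) is the regularized incomplete beta function. -/
open MeasureTheory Metric

/-!
Slicing by the hyperplanes `x_{d+1} = t` (Fubini) gives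
`vol(cap) = κ_d ∫_{r-h}^r (r² - t²)^{d/2} dt`, with `κ_d` the volume of the unit `d`-ball; the full
ball is the cap of height `2r`, and by evenness its integral is twice the one over `[0, r]`.
The substitution `s = 1 - (t/r)²` turns `∫_a^r (r² - t²)^{d/2} dt` into
`(r^{d+1}/2) ∫_0^{1-(a/r)²} s^{d/2} (1-s)^{-1/2} ds`. Performing it as an injective change of
variables on the open interval `(a, r)` means the singularity of `(1-s)^{-1/2}` at `s = 1`
(the case `h = r`) needs no separate limiting argument.
-/

open Set

lemma EuclideanSpace.norm_le_iff_sum_sq_le {ι : Type*} [Fintype ι] {ρ : ℝ} (hρ : 0 ≤ ρ)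
    (y : EuclideanSpace ℝ ι) : ‖y‖ ≤ ρ ↔ ∑ i, y i ^ 2 ≤ ρ ^ 2 := by
  simp [EuclideanSpace.norm_eq, Real.sqrt_le_left hρ]

lemma measurableSet_setOf_sum_sq_le {ι : Type*} [Fintype ι] (c : ℝ) :
    MeasurableSet {x : ι → ℝ | ∑ i, x i ^ 2 ≤ c} :=
  measurableSet_le (by fun_prop) measurable_const

lemma volume_setOf_sum_sq_le (d : ℕ) {c : ℝ} (hc : 0 ≤ c) :
    volume {x : Fin d → ℝ | ∑ i, x i ^ 2 ≤ c} =
      ENNReal.ofReal (√c ^ d) * volume (ball (0 : EuclideanSpace ℝ (Fin d)) 1) := by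
  have hpre : WithLp.ofLp ⁻¹' {x : Fin d → ℝ | ∑ i, x i ^ 2 ≤ c} =
      closedBall (0 : EuclideanSpace ℝ (Fin d)) √c := by
    ext y
    rw [mem_closedBall_zero_iff, EuclideanSpace.norm_le_iff_sum_sq_le (Real.sqrt_nonneg c),
      Real.sq_sqrt hc]
    rfl
  rw [← (PiLp.volume_preserving_ofLp (Fin d)).measure_preimage
      (measurableSet_setOf_sum_sq_le c).nullMeasurableSet, hpre,
    Measure.addHaar_closedBall _ _ (Real.sqrt_nonneg c), finrank_euclideanSpace_fin]

lemma volume_setOf_sum_sq_le_and_le_last (d : ℕ) {r a : ℝ} (hra : -r ≤ a) (har : a ≤ r) :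
    volume {x : Fin (d + 1) → ℝ | ∑ i, x i ^ 2 ≤ r ^ 2 ∧ a ≤ x (Fin.last d)} =
      ENNReal.ofReal (∫ t in a..r, √(r ^ 2 - t ^ 2) ^ d) *
        volume (ball (0 : EuclideanSpace ℝ (Fin d)) 1) := by
  set T : Set (ℝ × (Fin d → ℝ)) := {p | p.1 ^ 2 + ∑ j, p.2 j ^ 2 ≤ r ^ 2 ∧ a ≤ p.1}
  have hT : MeasurableSet T :=
    (measurableSet_le (f := fun p : ℝ × (Fin d → ℝ) => p.1 ^ 2 + ∑ j, p.2 j ^ 2) (by fun_prop)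
      measurable_const).inter (measurableSet_le measurable_const measurable_fst)
  have hpre : {x : Fin (d + 1) → ℝ | ∑ i, x i ^ 2 ≤ r ^ 2 ∧ a ≤ x (Fin.last d)} =
      MeasurableEquiv.piFinSuccAbove (fun _ => ℝ) (Fin.last d) ⁻¹' T := by
    ext x
    simp [T, Fin.sum_univ_castSucc, Fin.init, add_comm]
  have hslice : ∀ t, volume (Prod.mk t ⁻¹' T) = (Icc a r).indicator
      (fun t => ENNReal.ofReal (√(r ^ 2 - t ^ 2) ^ d) *
        volume (ball (0 : EuclideanSpace ℝ (Fin d)) 1)) t := by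
    intro t
    by_cases ht : t ∈ Icc a r
    · rw [indicator_of_mem ht, ← volume_setOf_sum_sq_le d (by nlinarith [ht.1, ht.2])]
      congr 1
      ext y
      simp only [T, mem_preimage, mem_ofPred_eq, ht.1, and_true]
      constructor <;> intro <;> linarith
    · rw [indicator_of_notMem ht, measure_eq_zero_iff_ae_notMem]
      refine Filter.Eventually.of_forall fun y ⟨hy, hat⟩ => ht ⟨hat, ?_⟩
      nlinarith [Finset.sum_nonneg fun j (_ : j ∈ Finset.univ) => sq_nonneg (y j)]
  rw [hpre, (volume_preserving_piFinSuccAbove (fun _ => ℝ) (Fin.last d)).measure_preimage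
      hT.nullMeasurableSet, Measure.volume_eq_prod, Measure.prod_apply hT, lintegral_congr hslice,
    lintegral_indicator measurableSet_Icc, lintegral_mul_const _ (by fun_prop),
    intervalIntegral.integral_of_le har, ← integral_Icc_eq_integral_Ioc,
    ofReal_integral_eq_lintegral_ofReal (by fun_prop : Continuous _).integrableOn_Icc
      (Filter.Eventually.of_forall fun t => by positivity)]

lemma volume_closedBall_inter_le_last (d : ℕ) {r a : ℝ} (hra : -r ≤ a) (har : a ≤ r) :
    volume {y : EuclideanSpace ℝ (Fin (d + 1)) |
        y ∈ closedBall (0 : EuclideanSpace ℝ (Fin (d + 1))) r ∧ a ≤ y (Fin.last d)} =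
      ENNReal.ofReal (∫ t in a..r, √(r ^ 2 - t ^ 2) ^ d) *
        volume (ball (0 : EuclideanSpace ℝ (Fin d)) 1) := by
  have hr : 0 ≤ r := by linarith
  have hmeas : MeasurableSet {x : Fin (d + 1) → ℝ | ∑ i, x i ^ 2 ≤ r ^ 2 ∧ a ≤ x (Fin.last d)} :=
    (measurableSet_setOf_sum_sq_le _).inter
      (measurableSet_le measurable_const (measurable_pi_apply _))
  rw [← volume_setOf_sum_sq_le_and_le_last d hra har,
    ← (PiLp.volume_preserving_ofLp (Fin (d + 1))).measure_preimage hmeas.nullMeasurableSet]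
  congr 1
  ext y
  rw [mem_ofPred_eq, mem_closedBall_zero_iff, EuclideanSpace.norm_le_iff_sum_sq_le hr]
  rfl

lemma closedBall_eq_setOf_neg_le_last (d : ℕ) (r : ℝ) :
    closedBall (0 : EuclideanSpace ℝ (Fin (d + 1))) r =
      {y | y ∈ closedBall (0 : EuclideanSpace ℝ (Fin (d + 1))) r ∧ -r ≤ y (Fin.last d)} := by
  ext y
  refine ⟨fun hy => ⟨hy, ?_⟩, And.left⟩
  have := (PiLp.norm_apply_le y (Fin.last d)).trans (mem_closedBall_zero_iff.1 hy)
  exact neg_le_of_abs_le this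

lemma intervalIntegral.integral_neg_eq_two_mul_of_even {f : ℝ → ℝ} (hf : Continuous f)
    (heven : ∀ x, f (-x) = f x) (r : ℝ) : ∫ x in -r..r, f x = 2 * ∫ x in 0..r, f x := by
  rw [← intervalIntegral.integral_add_adjacent_intervals (b := 0) (hf.intervalIntegrable _ _)
      (hf.intervalIntegrable _ _), two_mul]
  congr 1
  simpa [heven] using (intervalIntegral.integral_comp_neg (a := 0) (b := r) f).symm

lemma volume_closedBall_eq_integral (d : ℕ) {r : ℝ} (hr : 0 ≤ r) :
    volume (closedBall (0 : EuclideanSpace ℝ (Fin (d + 1))) r) =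
      ENNReal.ofReal (2 * ∫ t in (0 : ℝ)..r, √(r ^ 2 - t ^ 2) ^ d) *
        volume (ball (0 : EuclideanSpace ℝ (Fin d)) 1) := by
  rw [closedBall_eq_setOf_neg_le_last, volume_closedBall_inter_le_last d le_rfl (by linarith),
    intervalIntegral.integral_neg_eq_two_mul_of_even (by fun_prop) (fun t => by simp)]

lemma rpow_natCast_add_two_div_two_sub_one {y : ℝ} (hy : 0 ≤ y) (d : ℕ) :
    y ^ (((d : ℝ) + 2) / 2 - 1) = √y ^ d := by
  rw [show ((d : ℝ) + 2) / 2 - 1 = 1 / 2 * d by ring, Real.rpow_mul hy, ← Real.sqrt_eq_rpow,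
    Real.rpow_natCast]

lemma rpow_one_div_two_sub_one {y : ℝ} (hy : 0 ≤ y) : y ^ ((1 : ℝ) / 2 - 1) = (√y)⁻¹ := by
  rw [show (1 : ℝ) / 2 - 1 = -(1 / 2) by norm_num, Real.rpow_neg hy, ← Real.sqrt_eq_rpow]

lemma image_one_sub_div_sq_Ioo {r a : ℝ} (hr : 0 < r) (ha : 0 ≤ a) :
    (fun t => 1 - (t / r) ^ 2) '' Ioo a r = Ioo 0 (1 - (a / r) ^ 2) := by
  ext s
  constructor
  · rintro ⟨t, ⟨hat, htr⟩, rfl⟩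
    have h1 : a / r < t / r := div_lt_div_of_pos_right hat hr
    have h2 : t / r < 1 := (div_lt_one hr).2 htr
    have h0 : 0 ≤ a / r := by positivity
    constructor <;> nlinarith
  · rintro ⟨hs0, hs1⟩
    refine ⟨r * √(1 - s), ⟨?_, ?_⟩, ?_⟩
    · have : a / r < √(1 - s) := Real.lt_sqrt_of_sq_lt (by linarith)
      rwa [div_lt_iff₀' hr] at this
    · have : √(1 - s) < 1 := (Real.sqrt_lt' one_pos).2 (by linarith)
      nlinarith
    · have : 0 ≤ 1 - s := by nlinarith [sq_nonneg (a / r)]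
      simp only
      rw [mul_div_cancel_left₀ _ hr.ne', Real.sq_sqrt this]
      ring

lemma integral_rpow_mul_one_sub_rpow_eq_integral_sqrt_sq_sub_sq_pow (d : ℕ) {r a : ℝ}
    (hr : 0 < r) (ha : 0 ≤ a) (har : a ≤ r) :
    ∫ s in (0 : ℝ)..1 - (a / r) ^ 2, s ^ (((d : ℝ) + 2) / 2 - 1) * (1 - s) ^ ((1 : ℝ) / 2 - 1) =
      2 / r ^ (d + 1) * ∫ t in a..r, √(r ^ 2 - t ^ 2) ^ d := by
  have hx : 0 ≤ 1 - (a / r) ^ 2 := by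
    have : a / r ≤ 1 := (div_le_one hr).2 har
    nlinarith [div_nonneg ha hr.le]
  have hderiv : ∀ t ∈ Ioo a r,
      HasDerivWithinAt (fun t => 1 - (t / r) ^ 2) (-(2 * t / r ^ 2)) (Ioo a r) t := by
    intro t _
    refine HasDerivAt.hasDerivWithinAt ?_
    refine ((((hasDerivAt_id' t).div_const r).pow 2).const_sub 1).congr_deriv ?_
    norm_num
    field_simp
  have hinj : InjOn (fun t => 1 - (t / r) ^ 2) (Ioo a r) := by
    intro s hs t ht hst
    have hsq : (s / r) ^ 2 = (t / r) ^ 2 := by simpa using hst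
    have hs0 : 0 ≤ s / r := div_nonneg (ha.trans hs.1.le) hr.le
    have ht0 : 0 ≤ t / r := div_nonneg (ha.trans ht.1.le) hr.le
    exact (div_left_inj' hr.ne').1 ((sq_eq_sq₀ hs0 ht0).1 hsq)
  rw [intervalIntegral.integral_of_le hx, integral_Ioc_eq_integral_Ioo,
    ← image_one_sub_div_sq_Ioo hr ha,
    integral_image_eq_integral_abs_deriv_smul measurableSet_Ioo hderiv hinj,
    intervalIntegral.integral_of_le har, integral_Ioc_eq_integral_Ioo, ← integral_const_mul]
  refine setIntegral_congr_fun measurableSet_Ioo fun t ⟨hat, htr⟩ => ?_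
  have ht : 0 < t := ha.trans_lt hat
  have hsq : 1 - (t / r) ^ 2 = (r ^ 2 - t ^ 2) / r ^ 2 := by field_simp
  have hsq0 : 0 ≤ r ^ 2 - t ^ 2 := by nlinarith
  have hsqrt : √(1 - (t / r) ^ 2) = √(r ^ 2 - t ^ 2) / r := by
    rw [hsq, Real.sqrt_div' _ (sq_nonneg r), Real.sqrt_sq hr.le]
  simp only [smul_eq_mul]
  rw [rpow_natCast_add_two_div_two_sub_one (hsq ▸ by positivity) d, sub_sub_cancel,
    rpow_one_div_two_sub_one (sq_nonneg _), hsqrt, Real.sqrt_sq (by positivity), abs_neg,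
    abs_of_pos (by positivity), div_pow]
  field_simp
  ring

lemma integral_sqrt_sq_sub_sq_pow_pos (d : ℕ) {r : ℝ} (hr : 0 < r) :
    0 < ∫ t in (0 : ℝ)..r, √(r ^ 2 - t ^ 2) ^ d :=
  intervalIntegral.intervalIntegral_pos_of_pos_on
    ((by fun_prop : Continuous fun t : ℝ => √(r ^ 2 - t ^ 2) ^ d).intervalIntegrable _ _)
    (fun t ⟨ht0, htr⟩ => pow_pos (Real.sqrt_pos.2 (by nlinarith)) d) hr

/-- the volume of a hyperspherical cap of height `h` (`0 ≤ h ≤ r`) of the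
`(d+1)`-dimensional Euclidean ball of radius `r` (the part of `B(0;r)` above the
hyperplane where the last coordinate equals `r − h`) equals
`(1/2) · V_S · I_{(2rh−h²)/r²}(((d+1)+1)/2, 1/2)`. -/
theorem stmt_6 (d : ℕ) (r hh : ℝ) (hr : 0 < r) (hh0 : 0 ≤ hh) (hhr : hh ≤ r) :
    (volume {y : EuclideanSpace ℝ (Fin (d + 1)) |
        y ∈ Metric.closedBall (0 : EuclideanSpace ℝ (Fin (d + 1))) r ∧
        r - hh ≤ y (Fin.last d)}).toReal =
      (1 / 2) * (volume (Metric.closedBall (0 : EuclideanSpace ℝ (Fin (d + 1))) r)).toReal *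
        regIncBeta (((d : ℝ) + 2) / 2) (1 / 2)
          ((2 * r * hh - hh ^ 2) / r ^ 2) := by
  have hx : (2 * r * hh - hh ^ 2) / r ^ 2 = 1 - ((r - hh) / r) ^ 2 := by field_simp; ring
  have hcap := integral_rpow_mul_one_sub_rpow_eq_integral_sqrt_sq_sub_sq_pow d hr
    (sub_nonneg.2 hhr) (by linarith)
  have hball := integral_rpow_mul_one_sub_rpow_eq_integral_sqrt_sq_sub_sq_pow d hr le_rfl hr.le
  rw [zero_div, zero_pow two_ne_zero, sub_zero] at hball
  have hpos := integral_sqrt_sq_sub_sq_pow_pos d hr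
  rw [volume_closedBall_inter_le_last d (by linarith) (by linarith),
    volume_closedBall_eq_integral d hr.le, regIncBeta, hx, hcap, hball, ENNReal.toReal_mul,
    ENNReal.toReal_mul,
    ENNReal.toReal_ofReal (intervalIntegral.integral_nonneg (by linarith) fun t _ => by positivity),
    ENNReal.toReal_ofReal (by positivity)]
  field_simp
end

section
/- For two d-dimensional Euclidean balls of equal radius r with centers at distance ε, the ratio V_U/V_S = 2·(1 − I_{1−ε²/(4r²)}((d+1)/2, 1/2)) is monotonically increasing in ε on [0, 2r], with value 0 at ε = 0 and value 2 at ε = 2r. -/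
open MeasureTheory Set

section BetaIntegrand

variable {a b : ℝ}

lemma intervalIntegrable_betaIntegrand (ha : 1 ≤ a) (hb : 0 < b) {x y : ℝ}
    (hx : x ∈ Icc (0 : ℝ) 1) (hy : y ∈ Icc (0 : ℝ) 1) :
    IntervalIntegrable (fun t : ℝ => t ^ (a - 1) * (1 - t) ^ (b - 1)) volume x y := by
  have hright : IntervalIntegrable (fun t : ℝ => (1 - t) ^ (b - 1)) volume 0 1 := by
    simpa using ((intervalIntegral.intervalIntegrable_rpow' (r := b - 1) (a := 0) (b := 1)
      (by linarith)).comp_sub_left 1).symm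
  have hleft : ContinuousOn (fun t : ℝ => t ^ (a - 1)) (uIcc 0 1) :=
    (Real.continuous_rpow_const (by linarith)).continuousOn
  refine (hright.continuousOn_mul hleft).mono_set ?_
  rw [uIcc_subset_uIcc_iff_mem, uIcc_of_le zero_le_one]
  exact ⟨hx, hy⟩

lemma betaIntegrand_nonneg {t : ℝ} (ht : t ∈ Icc (0 : ℝ) 1) :
    0 ≤ t ^ (a - 1) * (1 - t) ^ (b - 1) :=
  mul_nonneg (Real.rpow_nonneg ht.1 _) (Real.rpow_nonneg (sub_nonneg.2 ht.2) _)

lemma integral_betaIntegrand_pos (ha : 1 ≤ a) (hb : 0 < b) :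
    0 < ∫ t in (0 : ℝ)..1, t ^ (a - 1) * (1 - t) ^ (b - 1) :=
  intervalIntegral.intervalIntegral_pos_of_pos_on
    (intervalIntegrable_betaIntegrand ha hb (by simp) (by simp))
    (fun _ ht => mul_pos (Real.rpow_pos_of_pos ht.1 _)
      (Real.rpow_pos_of_pos (sub_pos.2 ht.2) _))
    one_pos

end BetaIntegrand

section RegIncBeta

variable {a b : ℝ}

@[simp]
lemma regIncBeta_zero : regIncBeta a b 0 = 0 := by
  simp [regIncBeta]

lemma regIncBeta_one (ha : 1 ≤ a) (hb : 0 < b) : regIncBeta a b 1 = 1 :=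
  div_self (integral_betaIntegrand_pos ha hb).ne'

lemma monotoneOn_regIncBeta (ha : 1 ≤ a) (hb : 0 < b) :
    MonotoneOn (regIncBeta a b) (Icc 0 1) := by
  intro x hx y hy hxy
  refine div_le_div_of_nonneg_right ?_ (integral_betaIntegrand_pos ha hb).le
  refine intervalIntegral.integral_mono_interval le_rfl hx.1 hxy ?_
    (intervalIntegrable_betaIntegrand ha hb (by simp) hy)
  refine (ae_restrict_iff' measurableSet_Ioc).2 (ae_of_all _ fun t ht => ?_)
  exact betaIntegrand_nonneg ⟨ht.1.le, ht.2.trans hy.2⟩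

end RegIncBeta

section SquaredDistanceRatio

variable (r : ℝ)

lemma mapsTo_one_sub_sq_div :
    MapsTo (fun ε : ℝ => 1 - ε ^ 2 / (4 * r ^ 2)) (Icc 0 (2 * r)) (Icc 0 1) := by
  intro ε ⟨hε0, hε⟩
  have hsq : ε ^ 2 ≤ 4 * r ^ 2 := by nlinarith
  have hnn : 0 ≤ ε ^ 2 / (4 * r ^ 2) := by positivity
  exact ⟨sub_nonneg.2 (div_le_one_of_le₀ hsq (by positivity)), by simp only; linarith⟩

lemma antitoneOn_one_sub_sq_div :
    AntitoneOn (fun ε : ℝ => 1 - ε ^ 2 / (4 * r ^ 2)) (Icc 0 (2 * r)) := by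
  intro x hx y _ hxy
  have := pow_le_pow_left₀ hx.1 hxy 2
  simp only
  gcongr

end SquaredDistanceRatio

/-- the ratio `ε ↦ V_U/V_S = 2·(1 − I_{1−ε²/(4r²)}((d+1)/2, 1/2))` is
monotonically increasing on `[0, 2r]`, with value `0` at `ε = 0` and `2` at `ε = 2r`. -/
theorem stmt_14 (d : ℕ) (hd : 1 ≤ d) (r : ℝ) (hr : 0 < r) :
    MonotoneOn (fun ε : ℝ =>
        2 * (1 - regIncBeta (((d : ℝ) + 1) / 2) (1 / 2) (1 - ε ^ 2 / (4 * r ^ 2))))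
      (Set.Icc 0 (2 * r)) ∧
    2 * (1 - regIncBeta (((d : ℝ) + 1) / 2) (1 / 2) (1 - (0 : ℝ) ^ 2 / (4 * r ^ 2))) = 0 ∧
    2 * (1 - regIncBeta (((d : ℝ) + 1) / 2) (1 / 2) (1 - (2 * r) ^ 2 / (4 * r ^ 2))) = 2 := by
  have ha : (1 : ℝ) ≤ ((d : ℝ) + 1) / 2 := by
    have : (1 : ℝ) ≤ d := by exact_mod_cast hd
    linarith
  have hb : (0 : ℝ) < 1 / 2 := by norm_num
  have hI := (monotoneOn_regIncBeta ha hb).comp_AntitoneOn (antitoneOn_one_sub_sq_div r)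
    (mapsTo_one_sub_sq_div r)
  refine ⟨fun x hx y hy hxy => ?_, ?_, ?_⟩
  · have := hI hx hy hxy
    simp only [Function.comp_apply] at this ⊢
    linarith
  · rw [zero_pow two_ne_zero, zero_div, sub_zero, regIncBeta_one ha hb]
    ring
  · have : (2 * r) ^ 2 / (4 * r ^ 2) = 1 := by field_simp; ring
    simp [this]
end
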